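/- Every Euclidean (t, δ)-light complete traceability code is a Hamming (t, T)-light complete traceability code with T = ⌊2δ²⌋. -/
import Mathlib


open Finset

/-- Result of the averaging attack: the average of the columns of `H` indexed by `I`. -/
noncomputable def avgCols {n M : ℕ} (H : Fin n → Fin M → ℝ) (I : Finset (Fin M)) : Fin n → ℝ :=
  fun j => (I.card : ℝ)⁻¹ * ∑ i ∈ I, H j i

/-- `H` has entries in `{0, 1}`. -/
def IsBinaryMatrix {n M : ℕ} (H : Fin n → Fin M → ℝ) : Prop :=
  ∀ j i, H j i = 0 ∨ H j i = 1

/-- `H` is a Hamming `(t, T)`-light complete traceability code: the averaged columns of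
any two distinct coalitions of size at most `t` differ in more than `2T` coordinates. -/
def IsHammingLCT {n M : ℕ} (H : Fin n → Fin M → ℝ) (t T : ℕ) : Prop :=
  ∀ I₁ I₂ : Finset (Fin M), I₁.Nonempty → I₂.Nonempty → I₁ ≠ I₂ →
    I₁.card ≤ t → I₂.card ≤ t →
    2 * T < (Finset.univ.filter (fun j => avgCols H I₁ j ≠ avgCols H I₂ j)).card

/-- `H` is a Euclidean `(t, δ)`-light complete traceability code: the averaged columns of
any two distinct coalitions of size at most `t` are at Euclidean distance more than `2δ`. -/
def IsEuclideanLCT {n M : ℕ} (H : Fin n → Fin M → ℝ) (t : ℕ) (δ : ℝ) : Prop :=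
  ∀ I₁ I₂ : Finset (Fin M), I₁.Nonempty → I₂.Nonempty → I₁ ≠ I₂ →
    I₁.card ≤ t → I₂.card ≤ t →
    2 * δ < Real.sqrt (∑ j, (avgCols H I₁ j - avgCols H I₂ j) ^ 2)

theorem euclidean_to_hamming_LCT {n M t : ℕ} (δ : ℝ) (hδ : 0 ≤ δ)
    (H : Fin n → Fin M → ℝ) (hbin : IsBinaryMatrix H)
    (hH : IsEuclideanLCT H t δ) :
    IsHammingLCT H t ⌊2 * δ ^ 2⌋₊ := by
  intro I₁ I₂ h1 h2 hne ht1 ht2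
  by_contra hcon
  push_neg at hcon
  have hE := hH I₁ I₂ h1 h2 hne ht1 ht2
  have havg : ∀ (I : Finset (Fin M)), I.Nonempty → ∀ j,
      0 ≤ avgCols H I j ∧ avgCols H I j ≤ 1 := by
    intro I hI j
    have hpos : (0:ℝ) < I.card := by exact_mod_cast hI.card_pos
    constructor
    · apply mul_nonneg (inv_nonneg.2 hpos.le)
      exact Finset.sum_nonneg fun i _ => by rcases hbin j i with h|h <;> simp [h]
    · rw [avgCols, inv_mul_le_iff₀ hpos, mul_one]
      calc ∑ i ∈ I, H j i ≤ ∑ i ∈ I, 1 :=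
            Finset.sum_le_sum fun i _ => by rcases hbin j i with h|h <;> simp [h]
        _ = I.card := by simp
  have hsq : ∀ j, (avgCols H I₁ j - avgCols H I₂ j)^2 ≤
      if avgCols H I₁ j ≠ avgCols H I₂ j then 1 else 0 := by
    intro j
    by_cases h : avgCols H I₁ j = avgCols H I₂ j
    · simp [h]
    · simp only [h, ne_eq, not_false_eq_true, if_true]
      obtain ⟨a1, a2⟩ := havg I₁ h1 j
      obtain ⟨b1, b2⟩ := havg I₂ h2 j
      nlinarith
  set S := Finset.univ.filter (fun j => avgCols H I₁ j ≠ avgCols H I₂ j) with hS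
  have hsum : ∑ j, (avgCols H I₁ j - avgCols H I₂ j)^2 ≤ (S.card : ℝ) := by
    calc ∑ j, (avgCols H I₁ j - avgCols H I₂ j)^2
        ≤ ∑ j, (if avgCols H I₁ j ≠ avgCols H I₂ j then (1:ℝ) else 0) :=
          Finset.sum_le_sum fun j _ => hsq j
      _ = (S.card : ℝ) := by rw [Finset.sum_boole]
  have hfloor : (⌊2 * δ ^ 2⌋₊ : ℝ) ≤ 2 * δ ^ 2 := Nat.floor_le (by positivity)
  have hcard : (S.card : ℝ) ≤ 2 * (⌊2 * δ ^ 2⌋₊ : ℝ) := by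
    have : (S.card : ℝ) ≤ ((2 * ⌊2 * δ ^ 2⌋₊ : ℕ) : ℝ) := by exact_mod_cast hcon
    simpa [mul_comm] using this
  have hle : ∑ j, (avgCols H I₁ j - avgCols H I₂ j)^2 ≤ (2*δ)^2 := by nlinarith
  have := Real.sqrt_le_sqrt hle
  rw [Real.sqrt_sq (by positivity)] at this
  linarith
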